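/- Let ε ∈ ℂ with ε² + ε + 1 = 0. In R = MvPolynomial (Fin 3) ℂ with variables x, y, z, let P₄,…,P₁₂ be the nine ideals P₄=(x−z, y−z), P₅=(y−εx, z−ε²x), P₆=(y−ε²x, z−εx), P₇=(x−εz, y−z), P₈=(x−z, y−εz), P₉=(y−x, z−εx), P₁₀=(x−ε²z, y−z), P₁₁=(x−z, y−ε²z), P₁₂=(y−x, z−ε²x). Then P₄ ∩ P₅ ∩ ⋯ ∩ P₁₂ = Ideal.span {x³ − z³, y³ − z³}. -/

import Mathlib

open MvPolynomial

/-- The vanishing ideals of the nine points (1:1:1), (1:ε:ε²), (1:ε²:ε), (ε:1:1),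
(1:ε:1), (1:1:ε), (ε²:1:1), (1:ε²:1), (1:1:ε²), i.e. P₄, …, P₁₂. -/
noncomputable def Q (ε : ℂ) : Fin 9 → Ideal (MvPolynomial (Fin 3) ℂ) :=
  fun i =>
    let x : MvPolynomial (Fin 3) ℂ := X 0
    let y : MvPolynomial (Fin 3) ℂ := X 1
    let z : MvPolynomial (Fin 3) ℂ := X 2
    match i with
    | 0 => Ideal.span {x - z, y - z}
    | 1 => Ideal.span {y - C ε * x, z - C ε ^ 2 * x}
    | 2 => Ideal.span {y - C ε ^ 2 * x, z - C ε * x}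
    | 3 => Ideal.span {x - C ε * z, y - z}
    | 4 => Ideal.span {x - z, y - C ε * z}
    | 5 => Ideal.span {y - x, z - C ε * x}
    | 6 => Ideal.span {x - C ε ^ 2 * z, y - z}
    | 7 => Ideal.span {x - z, y - C ε ^ 2 * z}
    | 8 => Ideal.span {y - x, z - C ε ^ 2 * x}

/-!
In the chart `z = 1` the nine points form the grid `{1, ε, ε²}²`, so the intersection can be
computed one line `y = b z` at a time and then across the three lines. Both steps iterate
`(s, g) ∩ (t, g) = (s t, g)`, which holds in a factorial ring as soon as some ring endomorphism `φ`
kills `t`, fixes `g`, is the identity modulo `t`, and makes `φ s` coprime to `g`: if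
`p = a s + b g ∈ (t, g)`, applying `φ` shows `g ∣ φ a`, and `a ≡ φ a` modulo `t`.
Here `φ` is the substitution `X j ↦ c X k`, and coprimality reduces to `X k ∤ g`.
-/

open Ideal

theorem span_pair_eq_span_pair {R : Type*} [CommRing R] {a b c d : R}
    (ha : a ∈ span {c, d}) (hb : b ∈ span {c, d}) (hc : c ∈ span {a, b})
    (hd : d ∈ span {a, b}) : span {a, b} = span {c, d} :=
  le_antisymm (span_le.2 (Set.pair_subset ha hb)) (span_le.2 (Set.pair_subset hc hd))

theorem span_pair_inf_span_pair_eq_span_mul {R F : Type*} [CommRing R] [DecompositionMonoid R]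
    [FunLike F R R] [RingHomClass F R R] {s t g : R} (φ : F) (hφt : φ t = 0) (hφg : φ g = g)
    (hφ : ∀ q, q - φ q ∈ span {t}) (hg : IsRelPrime g (φ s)) :
    span {s, g} ⊓ span {t, g} = span {s * t, g} := by
  refine le_antisymm ?_ (le_inf ?_ ?_)
  · rintro _ ⟨hps, hpt⟩
    obtain ⟨a, b, rfl⟩ := mem_span_pair.1 hps
    obtain ⟨a', b', hp⟩ := mem_span_pair.1 hpt
    have hφp := congrArg φ hp
    simp only [map_add, map_mul, hφt, hφg, mul_zero, zero_add] at hφp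
    obtain ⟨w, hw⟩ : g ∣ φ a := hg.dvd_of_dvd_mul_right ⟨φ b' - φ b, by linear_combination -hφp⟩
    obtain ⟨v, hv⟩ := mem_span_singleton'.1 (hφ a)
    exact mem_span_pair.2 ⟨v, w * s + b, by linear_combination s * hv - s * hw⟩
  · exact span_le.2 (Set.pair_subset (mul_mem_right t _ (subset_span (by simp)))
      (subset_span (by simp)))
  · exact span_le.2 (Set.pair_subset (mul_mem_left _ s (subset_span (by simp)))
      (subset_span (by simp)))

theorem sub_aeval_mem {σ R : Type*} [CommRing R] {I : Ideal (MvPolynomial σ R)}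
    {f : σ → MvPolynomial σ R} (hf : ∀ i, X i - f i ∈ I) (q : MvPolynomial σ R) :
    q - aeval f q ∈ I := by
  have hcomp : (Quotient.mkₐ R I).comp (aeval f) = Quotient.mkₐ R I :=
    algHom_ext fun i => by simpa using (Ideal.Quotient.eq.2 (hf i)).symm
  exact Ideal.Quotient.eq.1 (AlgHom.congr_fun hcomp q).symm

section Substitution

variable {σ K : Type*} [Field K] {j k : σ}

theorem isRelPrime_X_of_eval_ne_zero {g : MvPolynomial σ K} (v : σ → K) (hv : v k = 0)
    (hg : eval v g ≠ 0) : IsRelPrime g (X k) :=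
  (X_prime.irreducible.isRelPrime_iff_not_dvd.2 fun ⟨c, hc⟩ => hg (by simp [hc, hv])).symm

theorem X_sub_C_mul_X_mul_mul_eq_X_pow_three_sub {ε : K} (hε : ε ^ 2 + ε + 1 = 0) (j k : σ) :
    (X j - C 1 * X k) * (X j - C ε * X k) * (X j - C (ε ^ 2) * X k) = X j ^ 3 - X k ^ 3 := by
  have hCε : (C ε : MvPolynomial σ K) ^ 2 + C ε + 1 = 0 := by simpa using congrArg C hε
  rw [map_one, one_mul, map_pow]
  linear_combination (X k ^ 3 - X j ^ 2 * X k - C ε * X k ^ 3 + C ε * X j * X k ^ 2) * hCε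

variable [DecidableEq σ]

theorem aeval_update_eq_self {g : MvPolynomial σ K} (hgj : j ∉ g.vars) (f : MvPolynomial σ K) :
    aeval (Function.update X j f) g = g := by
  conv_rhs => rw [← aeval_X_left_apply g]
  refine hom_congr_vars (f₁ := (aeval (Function.update X j f)).toRingHom)
    (f₂ := (aeval X).toRingHom) (by ext; simp) (fun i hi _ => ?_) rfl
  simp [Function.update_of_ne (ne_of_mem_of_not_mem hi hgj)]

theorem aeval_update_X_sub_C_mul_X (hjk : j ≠ k) (a b : K) :
    aeval (Function.update X j (C a * X k)) (X j - C b * X k) = C (a - b) * X k := by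
  simp only [map_sub, map_mul, aeval_X, aeval_C, algebraMap_eq, Function.update_self,
    Function.update_of_ne hjk.symm]
  ring

theorem sub_aeval_update_mem (hjk : j ≠ k) (a : K) (q : MvPolynomial σ K) :
    q - aeval (Function.update X j (C a * X k)) q ∈ span {X j - C a * X k} := by
  refine sub_aeval_mem (fun i => ?_) q
  rcases eq_or_ne i j with rfl | hij
  · simp
  · simp [hij]

theorem span_pair_inf_span_X_sub_C_mul_X (hjk : j ≠ k) {g s : MvPolynomial σ K}
    (hgj : j ∉ g.vars) {a : K} (hs : IsRelPrime g (aeval (Function.update X j (C a * X k)) s)) :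
    span {s, g} ⊓ span {X j - C a * X k, g} = span {s * (X j - C a * X k), g} :=
  span_pair_inf_span_pair_eq_span_mul _
    (by rw [aeval_update_X_sub_C_mul_X hjk, sub_self, map_zero, zero_mul])
    (aeval_update_eq_self hgj _) (sub_aeval_update_mem hjk a) hs

theorem span_pair_X_sub_C_mul_X_inf_inf (hjk : j ≠ k) {g : MvPolynomial σ K}
    (hgj : j ∉ g.vars) (hgk : IsRelPrime g (X k)) {a₀ a₁ a₂ : K} (h₀₁ : a₀ ≠ a₁)
    (h₀₂ : a₀ ≠ a₂) (h₁₂ : a₁ ≠ a₂) :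
    span {X j - C a₀ * X k, g} ⊓ span {X j - C a₁ * X k, g} ⊓ span {X j - C a₂ * X k, g} =
      span {(X j - C a₀ * X k) * (X j - C a₁ * X k) * (X j - C a₂ * X k), g} := by
  have hrel {a b : K} (hab : a ≠ b) :
      IsRelPrime g (aeval (Function.update X j (C a * X k)) (X j - C b * X k)) := by
    rwa [aeval_update_X_sub_C_mul_X hjk,
      isRelPrime_mul_unit_left_right ((isUnit_iff_ne_zero.2 (sub_ne_zero.2 hab)).map C)]
  rw [span_pair_inf_span_X_sub_C_mul_X hjk hgj (hrel h₀₁.symm),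
    span_pair_inf_span_X_sub_C_mul_X hjk hgj
      (by rw [map_mul]; exact (hrel h₀₂.symm).mul_right (hrel h₁₂.symm))]

end Substitution

section CubeRootOfUnity

variable {ε : ℂ}

theorem distinct_of_sq_add_add_one_eq_zero (hε : ε ^ 2 + ε + 1 = 0) :
    1 ≠ ε ∧ 1 ≠ ε ^ 2 ∧ ε ≠ ε ^ 2 := by
  refine ⟨fun h => ?_, fun h => ?_, fun h => ?_⟩
  · subst h; norm_num at hε
  · have : ε = -2 := by linear_combination hε + h
    subst this; norm_num at h
  · have : ε = -1 / 2 := by linear_combination (1 / 2) * hε + (1 / 2) * h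
    subst this; norm_num at h

theorem C_pow_three_eq_one (hε : ε ^ 2 + ε + 1 = 0) : (C ε : MvPolynomial (Fin 3) ℂ) ^ 3 = 1 := by
  rw [← map_pow, show ε ^ 3 = 1 by linear_combination (ε - 1) * hε, map_one]

/-- The vanishing ideal of the point `(a : b : 1)` of the projective plane. -/
noncomputable def pointIdeal (a b : ℂ) : Ideal (MvPolynomial (Fin 3) ℂ) :=
  span {X 0 - C a * X 2, X 1 - C b * X 2}

theorem Q_one_eq (hε : ε ^ 2 + ε + 1 = 0) : Q ε 1 = pointIdeal ε (ε ^ 2) := by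
  have hC := C_pow_three_eq_one hε
  simp only [Q, pointIdeal, map_pow]
  refine span_pair_eq_span_pair ?_ ?_ ?_ ?_ <;> rw [mem_span_pair]
  · exact ⟨-C ε, 1, by ring⟩
  · exact ⟨-C ε ^ 2, 0, by linear_combination X 2 * hC⟩
  · exact ⟨0, -C ε, by linear_combination X 0 * hC⟩
  · exact ⟨1, -C ε ^ 2, by linear_combination C ε * X 0 * hC⟩

theorem Q_two_eq (hε : ε ^ 2 + ε + 1 = 0) : Q ε 2 = pointIdeal (ε ^ 2) ε := by
  have hC := C_pow_three_eq_one hε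
  simp only [Q, pointIdeal, map_pow]
  refine span_pair_eq_span_pair ?_ ?_ ?_ ?_ <;> rw [mem_span_pair]
  · exact ⟨-C ε ^ 2, 1, by linear_combination C ε * X 2 * hC⟩
  · exact ⟨-C ε, 0, by linear_combination X 2 * hC⟩
  · exact ⟨0, -C ε ^ 2, by linear_combination X 0 * hC⟩
  · exact ⟨1, -C ε, by ring⟩

theorem Q_five_eq (hε : ε ^ 2 + ε + 1 = 0) : Q ε 5 = pointIdeal (ε ^ 2) (ε ^ 2) := by
  have hC := C_pow_three_eq_one hε
  simp only [Q, pointIdeal, map_pow]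
  refine span_pair_eq_span_pair ?_ ?_ ?_ ?_ <;> rw [mem_span_pair]
  · exact ⟨-1, 1, by ring⟩
  · exact ⟨-C ε, 0, by linear_combination X 2 * hC⟩
  · exact ⟨0, -C ε ^ 2, by linear_combination X 0 * hC⟩
  · exact ⟨1, -C ε ^ 2, by linear_combination X 0 * hC⟩

theorem Q_eight_eq (hε : ε ^ 2 + ε + 1 = 0) : Q ε 8 = pointIdeal ε ε := by
  have hC := C_pow_three_eq_one hε
  simp only [Q, pointIdeal]
  refine span_pair_eq_span_pair ?_ ?_ ?_ ?_ <;> rw [mem_span_pair]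
  · exact ⟨-1, 1, by ring⟩
  · exact ⟨-C ε ^ 2, 0, by linear_combination X 2 * hC⟩
  · exact ⟨0, -C ε, by linear_combination X 0 * hC⟩
  · exact ⟨1, -C ε, by linear_combination X 0 * hC⟩

theorem iInf_Q_eq (hε : ε ^ 2 + ε + 1 = 0) :
    ⨅ i, Q ε i =
      pointIdeal 1 1 ⊓ pointIdeal ε 1 ⊓ pointIdeal (ε ^ 2) 1 ⊓
        (pointIdeal 1 ε ⊓ pointIdeal ε ε ⊓ pointIdeal (ε ^ 2) ε) ⊓
        (pointIdeal 1 (ε ^ 2) ⊓ pointIdeal ε (ε ^ 2) ⊓ pointIdeal (ε ^ 2) (ε ^ 2)) := by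
  have h0 : Q ε 0 = pointIdeal 1 1 := by simp [Q, pointIdeal]
  have h3 : Q ε 3 = pointIdeal ε 1 := by simp [Q, pointIdeal]
  have h4 : Q ε 4 = pointIdeal 1 ε := by simp [Q, pointIdeal]
  have h6 : Q ε 6 = pointIdeal (ε ^ 2) 1 := by simp [Q, pointIdeal]
  have h7 : Q ε 7 = pointIdeal 1 (ε ^ 2) := by simp [Q, pointIdeal]
  rw [← h0, ← Q_one_eq hε, ← Q_two_eq hε, ← h3, ← h4, ← Q_five_eq hε, ← h6, ← h7,
    ← Q_eight_eq hε]
  ext p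
  simp only [Submodule.mem_iInf, Fin.forall_fin_succ, Submodule.mem_inf, Fin.isValue,
    Fin.succ_zero_eq_one, Fin.succ_one_eq_two, Fin.reduceSucc, IsEmpty.forall_iff, and_true]
  tauto

theorem pointIdeal_inf_pointIdeal_inf_pointIdeal (hε : ε ^ 2 + ε + 1 = 0) (b : ℂ) :
    pointIdeal 1 b ⊓ pointIdeal ε b ⊓ pointIdeal (ε ^ 2) b =
      span {X 0 ^ 3 - X 2 ^ 3, X 1 - C b * X 2} := by
  obtain ⟨h₀₁, h₀₂, h₁₂⟩ := distinct_of_sq_add_add_one_eq_zero hε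
  have hg : (0 : Fin 3) ∉ (X 1 - C b * X 2 : MvPolynomial (Fin 3) ℂ).vars := fun h => by
    rcases Finset.mem_union.1 (vars_sub_subset _ h) with h | h
    · simp [vars_X] at h
    · simpa [vars_X, vars_C] using vars_mul _ _ h
  rw [← X_sub_C_mul_X_mul_mul_eq_X_pow_three_sub hε]
  exact span_pair_X_sub_C_mul_X_inf_inf (by decide) hg
    (isRelPrime_X_of_eval_ne_zero ![0, 1, 0] rfl (by simp)) h₀₁ h₀₂ h₁₂

theorem span_pair_X_pow_three_sub_inf_inf (hε : ε ^ 2 + ε + 1 = 0) :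
    span {X 0 ^ 3 - X 2 ^ 3, X 1 - C 1 * X 2} ⊓ span {X 0 ^ 3 - X 2 ^ 3, X 1 - C ε * X 2} ⊓
        span {X 0 ^ 3 - X 2 ^ 3, X 1 - C (ε ^ 2) * X 2} =
      (span {X 0 ^ 3 - X 2 ^ 3, X 1 ^ 3 - X 2 ^ 3} : Ideal (MvPolynomial (Fin 3) ℂ)) := by
  obtain ⟨h₀₁, h₀₂, h₁₂⟩ := distinct_of_sq_add_add_one_eq_zero hε
  have hg : (1 : Fin 3) ∉ (X 0 ^ 3 - X 2 ^ 3 : MvPolynomial (Fin 3) ℂ).vars := fun h => by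
    rcases Finset.mem_union.1 (vars_sub_subset _ h) with h | h <;>
      simpa [vars_X] using vars_pow _ _ h
  simp only [span_pair_comm (x := (X 0 ^ 3 - X 2 ^ 3 : MvPolynomial (Fin 3) ℂ))]
  rw [span_pair_X_sub_C_mul_X_inf_inf (by decide) hg
    (isRelPrime_X_of_eval_ne_zero ![1, 0, 0] rfl (by simp)) h₀₁ h₀₂ h₁₂,
    X_sub_C_mul_X_mul_mul_eq_X_pow_three_sub hε]

end CubeRootOfUnity

theorem J_eq_span (ε : ℂ) (hε : ε ^ 2 + ε + 1 = 0) :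
    (⨅ i : Fin 9, Q ε i) =
      Ideal.span {X 0 ^ 3 - X 2 ^ 3, X 1 ^ 3 - X 2 ^ 3} := by
  rw [iInf_Q_eq hε, pointIdeal_inf_pointIdeal_inf_pointIdeal hε,
    pointIdeal_inf_pointIdeal_inf_pointIdeal hε, pointIdeal_inf_pointIdeal_inf_pointIdeal hε,
    span_pair_X_pow_three_sub_inf_inf hε]
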